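/- Consider the Evaluator Machine for ◇_{[t1,t2]} α (with t1 ≤ t2) whose queue evolves as: at each time step prepend M at index 0; if α holds at the current time, set all cells in range [t1,t2] to ⊤ (when they exist); if α fails, set the cell at index t2 to ⊥ only if its current value is M. Then for all i ≥ t2+1: Q^i[t2+1] = ⊤ iff there exists j ∈ [i−t2−1+t1, i−1] with α true at time j in x, and Q^i[t2+1] = ⊥ otherwise. -/

import Mathlib

/-!
The cell created at time `b` sits at index `k` at time `b + k`, and cells only move right, so
its history depends on `α` at times `b, …, b + k` alone. It is `⊤` as soon as `α` has held at a
time `b + j` with `t1 ≤ j ≤ t2`. Otherwise it stays `Maybe` until it sits at index `t2` at a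
time where `α` fails, which turns it into `⊥` for good. Index `t2 + 1` at time `i` holds the cell
created at `i - t2 - 1`, whose window `[i - t2 - 1 + t1, i - 1]` is then complete.
-/

inductive Cell : Type
  | top : Cell
  | bot : Cell
  | maybe : Cell
deriving DecidableEq

def run (step : ℕ → List Cell → List Cell) : ℕ → List Cell
  | 0 => step 0 []
  | i + 1 => step (i + 1) (run step i)

def setRange (a b : ℕ) (v : Cell) (q : List Cell) : List Cell :=
  q.mapIdx fun j c => if a ≤ j ∧ j ≤ b then v else c

def setIfMaybe (k : ℕ) (v : Cell) (q : List Cell) : List Cell :=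
  q.mapIdx fun j c => if j = k ∧ c = Cell.maybe then v else c

def setRangeIfMaybe (a b : ℕ) (v : Cell) (q : List Cell) : List Cell :=
  q.mapIdx fun j c => if (a ≤ j ∧ j ≤ b) ∧ c = Cell.maybe then v else c

def diamondStep (α : ℕ → Bool) (t1 t2 : ℕ) (i : ℕ) (q : List Cell) : List Cell :=
  let q' := Cell.maybe :: q
  if α i then setRange t1 t2 Cell.top q' else setIfMaybe t2 Cell.bot q'

def cellUpdate (α : ℕ → Bool) (t1 t2 i k : ℕ) (c : Cell) : Cell :=
  if α i then (if t1 ≤ k ∧ k ≤ t2 then Cell.top else c)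
  else (if k = t2 ∧ c = Cell.maybe then Cell.bot else c)

/-- The cell created at time `b` has, `k` steps later, seen `α` hold while its index was in
`[t1, t2]`. -/
def WindowHit (α : ℕ → Bool) (t1 t2 b k : ℕ) : Prop :=
  ∃ j, b + t1 ≤ j ∧ j ≤ b + min k t2 ∧ α j = true

open Classical in
noncomputable def expectedCell (α : ℕ → Bool) (t1 t2 b k : ℕ) : Cell :=
  if WindowHit α t1 t2 b k then Cell.top else if t2 ≤ k then Cell.bot else Cell.maybe

section

variable {α : ℕ → Bool} {t1 t2 : ℕ}

theorem diamondStep_eq_mapIdx (i : ℕ) (q : List Cell) :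
    diamondStep α t1 t2 i q = (Cell.maybe :: q).mapIdx (cellUpdate α t1 t2 i) := by
  unfold diamondStep cellUpdate
  cases α i <;> rfl

theorem getElem?_diamondStep (i : ℕ) (q : List Cell) (k : ℕ) :
    (diamondStep α t1 t2 i q)[k]? = (Cell.maybe :: q)[k]?.map (cellUpdate α t1 t2 i k) := by
  rw [diamondStep_eq_mapIdx, List.getElem?_mapIdx]

theorem run_diamondStep_getElem?_zero (b : ℕ) :
    (run (diamondStep α t1 t2) b)[0]? = some (cellUpdate α t1 t2 b 0 Cell.maybe) := by
  cases b <;> simp [run, getElem?_diamondStep]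

theorem run_diamondStep_getElem?_succ (i k : ℕ) :
    (run (diamondStep α t1 t2) (i + 1))[k + 1]? =
      (run (diamondStep α t1 t2) i)[k]?.map (cellUpdate α t1 t2 (i + 1) (k + 1)) := by
  simp [run, getElem?_diamondStep]

theorem windowHit_zero {b : ℕ} : WindowHit α t1 t2 b 0 ↔ t1 = 0 ∧ α b = true := by
  constructor
  · rintro ⟨j, h1, h2, hj⟩
    obtain rfl : j = b := by omega
    exact ⟨by omega, hj⟩
  · rintro ⟨rfl, hb⟩
    exact ⟨b, by omega, by omega, hb⟩

theorem windowHit_succ {b k : ℕ} :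
    WindowHit α t1 t2 b (k + 1) ↔
      WindowHit α t1 t2 b k ∨ (t1 ≤ k + 1 ∧ k + 1 ≤ t2 ∧ α (b + k + 1) = true) := by
  constructor
  · rintro ⟨j, h1, h2, hj⟩
    by_cases hjk : j = b + k + 1
    · subst hjk
      exact Or.inr ⟨by omega, by omega, hj⟩
    · exact Or.inl ⟨j, h1, by omega, hj⟩
  · rintro (⟨j, h1, h2, hj⟩ | ⟨h1, h2, hj⟩)
    · exact ⟨j, h1, by omega, hj⟩
    · exact ⟨b + k + 1, by omega, by omega, hj⟩

-- `t1 ≤ t2`: when `α` holds as the cell reaches index `t2`, it must become `⊤`, not stay `Maybe`.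
theorem cellUpdate_maybe_zero (h12 : t1 ≤ t2) (b : ℕ) :
    cellUpdate α t1 t2 b 0 Cell.maybe = expectedCell α t1 t2 b 0 := by
  unfold cellUpdate expectedCell
  rw [windowHit_zero]
  split_ifs <;> simp_all

theorem cellUpdate_expectedCell (h12 : t1 ≤ t2) (b k : ℕ) :
    cellUpdate α t1 t2 (b + k + 1) (k + 1) (expectedCell α t1 t2 b k) =
      expectedCell α t1 t2 b (k + 1) := by
  unfold cellUpdate expectedCell
  rw [windowHit_succ]
  split_ifs <;> simp_all <;> omega

theorem run_diamondStep_getElem? (h12 : t1 ≤ t2) (b k : ℕ) :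
    (run (diamondStep α t1 t2) (b + k))[k]? = some (expectedCell α t1 t2 b k) := by
  induction k with
  | zero => rw [Nat.add_zero, run_diamondStep_getElem?_zero, cellUpdate_maybe_zero h12]
  | succ k ih =>
    rw [← Nat.add_assoc, run_diamondStep_getElem?_succ, ih, Option.map_some,
      cellUpdate_expectedCell h12]

end

/-- Correctness of the Diamond Evaluator Machine: for all `i ≥ t2 + 1`, the cell at
index `t2 + 1` equals `⊤` iff `α` holds at some time `j ∈ [i − t2 − 1 + t1, i − 1]`
(i.e. `x^{i−t2−1} ⊨ ◇_{[t1,t2]} α`), and equals `⊥` otherwise. -/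
theorem diamond_EM_correct (α : ℕ → Bool) (t1 t2 : ℕ) (h12 : t1 ≤ t2)
    (i : ℕ) (hi : t2 + 1 ≤ i) :
    ((run (diamondStep α t1 t2) i)[t2 + 1]? = some Cell.top ↔
      ∃ j, i - t2 - 1 + t1 ≤ j ∧ j ≤ i - 1 ∧ α j = true) ∧
    (¬ (∃ j, i - t2 - 1 + t1 ≤ j ∧ j ≤ i - 1 ∧ α j = true) →
      (run (diamondStep α t1 t2) i)[t2 + 1]? = some Cell.bot) := by
  obtain ⟨b, rfl⟩ : ∃ b, i = b + (t2 + 1) := ⟨i - (t2 + 1), by omega⟩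
  have hwindow : WindowHit α t1 t2 b (t2 + 1) ↔
      ∃ j, b + (t2 + 1) - t2 - 1 + t1 ≤ j ∧ j ≤ b + (t2 + 1) - 1 ∧ α j = true := by
    simp only [WindowHit, show min (t2 + 1) t2 = t2 by omega,
      show b + (t2 + 1) - t2 - 1 = b by omega, show b + (t2 + 1) - 1 = b + t2 by omega]
  rw [run_diamondStep_getElem? h12, ← hwindow, expectedCell]
  by_cases hit : WindowHit α t1 t2 b (t2 + 1) <;> simp [hit]
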